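/- Let ℒ be the set consisting of the empty path together with all paths in ℰ of the form U^{ℓ_1}(DU)^{k_1}U^{ℓ_2}(DU)^{k_2}⋯U^{ℓ_r}(DU)^{k_r}U^{ℓ_{r+1}}C_s, where r ≥ 0, ℓ_i ≥ 1 and k_i ≥ 1 for 1 ≤ i ≤ r, ℓ_{r+1} ≥ 0 (for r = 0 the path has the form U^ℓC_s with ℓ ≥ 1), and s ≥ 1 is such that the path ends on the x-axis (with the convention C_1 = D). Then for every path P ∈ ℰ there exists exactly one path Q ∈ ℒ with |Q| = |P| such that P and Q are DU-equivalent. In other words, ℒ is a complete set of representatives of the DU-equivalence classes of ℰ. -/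

import Mathlib

/-- Steps of a Dyck path with catastrophes: up-step `U`, down-step `D`,
and catastrophe step `C k` of size `k` (valid paths only use `k ≥ 2`). -/
inductive Step where
  | U : Step
  | D : Step
  | C : ℕ → Step
  deriving DecidableEq

/-- The vertical displacement of a step. -/
def Step.val : Step → ℤ
  | .U => 1
  | .D => -1
  | .C k => -(k : ℤ)

/-- The height (ordinate) of the path after its first `i` steps. -/
def hgt (P : List Step) (i : ℕ) : ℤ := ((P.take i).map Step.val).sum

/-- `InE P` means `P` is a Dyck path with catastrophes (a member of ℰ):
it stays at height ≥ 0, ends on the x-axis, and every catastrophe step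
`C k` has `k ≥ 2` and starts at height `k` (hence ends on the x-axis). -/
def InE (P : List Step) : Prop :=
  (∀ i, 0 ≤ hgt P i) ∧ hgt P P.length = 0 ∧
    ∀ i k, P[i]? = some (Step.C k) → 2 ≤ k ∧ hgt P i = (k : ℤ)

/-- `(UD)^k`. -/
def UDpow (k : ℕ) : List Step := (List.replicate k [Step.U, Step.D]).flatten

/-- `(DU)^k`. -/
def DUpow (k : ℕ) : List Step := (List.replicate k [Step.D, Step.U]).flatten

/-- `U^k`. -/
def Upow (k : ℕ) : List Step := List.replicate k Step.U

/-- `C_s` with the convention `C_1 = D`. -/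
def cfin (s : ℕ) : Step := if s = 1 then Step.D else Step.C s

/-- Test whether a step is a catastrophe step. -/
def isCatB : Step → Bool
  | .C _ => true
  | _ => false

/-- The number of catastrophe steps in a path. -/
def catCount (P : List Step) : ℕ := P.countP isCatB

/-- Two paths are `DU`-equivalent when the occurrences of the pattern `DU`
appear at the same positions in both paths. -/
def DUEquiv (P Q : List Step) : Prop :=
  ∀ i : ℕ, (P[i]? = some Step.D ∧ P[i + 1]? = some Step.U) ↔
    (Q[i]? = some Step.D ∧ Q[i + 1]? = some Step.U)

/-- Membership in ℒ : the empty path, together with paths of the form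
`U^{ℓ_1} (DU)^{k_1} ⋯ U^{ℓ_r} (DU)^{k_r} U^{ℓ_{r+1}} C_s` with `r ≥ 0`,
`ℓ_i ≥ 1` and `k_i ≥ 1` for `1 ≤ i ≤ r`, `ℓ_{r+1} ≥ 0` (for `r = 0` the path
has the form `U^ℓ C_s` with `ℓ ≥ 1`), and `s ≥ 1` (with the convention
`C_1 = D`). The blocks `U^{ℓ_i} (DU)^{k_i}` are encoded by a list of pairs. -/
def InL (P : List Step) : Prop :=
  P = [] ∨
  (∃ l s, 1 ≤ l ∧ 1 ≤ s ∧ P = Upow l ++ [cfin s]) ∨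
  ∃ (L : List (ℕ × ℕ)) (m s : ℕ),
    L ≠ [] ∧ (∀ t ∈ L, 1 ≤ t.1 ∧ 1 ≤ t.2) ∧ 1 ≤ s ∧
    P = (L.map (fun t => Upow t.1 ++ DUpow t.2)).flatten ++ Upow m ++ [cfin s]

/-!
A path of ℰ of length `n ≥ 2` neither starts with `D` nor ends with `DU`, and two occurrences of
`DU` never overlap. Hence writing `D` at the positions of its `DU`-occurrences and `U` at all other
positions among the first `n - 1` gives a word that starts with `U` and in which every `D` is
followed by `U`: these are exactly the words `U^{ℓ_1}(DU)^{k_1}⋯U^{ℓ_r}(DU)^{k_r}U^{ℓ_{r+1}}`.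
Such a word never goes below the axis and ends at a height `s ≥ 1`, so appending `C_s` yields a
path of ℒ with the same `DU`-occurrences. Conversely, in a path `W C_s` of ℒ the `DU`-occurrences
are exactly the `D`s of `W`, which determine `W`, and `s` is then forced by the return to the axis.
-/

lemma hgt_zero (P : List Step) : hgt P 0 = 0 := by simp [hgt]

lemma hgt_succ_of_getElem? {P : List Step} {i : ℕ} {x : Step} (h : P[i]? = some x) :
    hgt P (i + 1) = hgt P i + x.val := by
  simp [hgt, List.take_add_one, h]

lemma hgt_of_length_le {P : List Step} {i : ℕ} (h : P.length ≤ i) :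
    hgt P i = hgt P P.length := by
  simp [hgt, List.take_of_length_le h]

lemma hgt_append_of_le_length {A B : List Step} {j : ℕ} (h : j ≤ A.length) :
    hgt (A ++ B) j = hgt A j := by
  simp [hgt, List.take_append_of_le_length h]

lemma cfin_val (s : ℕ) : (cfin s).val = -(s : ℤ) := by
  unfold cfin; split <;> simp_all [Step.val]

lemma hgt_append_cfin (W : List Step) (s : ℕ) :
    hgt (W ++ [cfin s]) (W.length + 1) = hgt W W.length - s := by
  rw [hgt_succ_of_getElem? (x := cfin s) (by simp), hgt_append_of_le_length le_rfl, cfin_val]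
  ring

structure IsBlockWord (W : List Step) : Prop where
  mem : ∀ x ∈ W, x = .U ∨ x = .D
  getElem?_succ_of_eq_D : ∀ i, W[i]? = some .D → W[i + 1]? = some .U

namespace IsBlockWord

lemma nil : IsBlockWord [] := ⟨by simp, by simp⟩

lemma tail {x : Step} {W : List Step} (h : IsBlockWord (x :: W)) : IsBlockWord W :=
  ⟨fun y hy => h.mem y (List.mem_cons_of_mem x hy), fun i hi => h.getElem?_succ_of_eq_D (i + 1) hi⟩

lemma append {A B : List Step} (hA : IsBlockWord A) (hB : IsBlockWord B) :
    IsBlockWord (A ++ B) := by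
  refine ⟨fun x hx => (List.mem_append.1 hx).elim (hA.mem x) (hB.mem x), fun i hi => ?_⟩
  rcases lt_or_ge i A.length with h | h
  · rw [List.getElem?_append_left h] at hi
    have hA' := hA.getElem?_succ_of_eq_D i hi
    rwa [List.getElem?_append_left (List.getElem?_eq_some_iff.1 hA').1]
  · rw [List.getElem?_append_right h] at hi
    rw [List.getElem?_append_right (by omega), Nat.sub_add_comm h]
    exact hB.getElem?_succ_of_eq_D _ hi

end IsBlockWord

lemma isBlockWord_flatten {ws : List (List Step)} (h : ∀ w ∈ ws, IsBlockWord w) :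
    IsBlockWord ws.flatten := by
  induction ws with
  | nil => exact .nil
  | cons w ws ih =>
    exact (h w List.mem_cons_self).append (ih fun v hv => h v (List.mem_cons_of_mem w hv))

lemma isBlockWord_Upow (k : ℕ) : IsBlockWord (Upow k) := by
  refine ⟨fun x hx => .inl (List.eq_of_mem_replicate hx), fun i hi => ?_⟩
  simp only [Upow, List.getElem?_replicate] at hi
  split at hi <;> simp at hi

lemma isBlockWord_DUpow (k : ℕ) : IsBlockWord (DUpow k) := by
  refine isBlockWord_flatten fun w hw => ?_
  rw [List.eq_of_mem_replicate hw]
  refine ⟨by simp, fun i hi => ?_⟩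
  match i with
  | 0 => rfl
  | i + 1 => simp [List.getElem?_cons] at hi

def blockWord (L : List (ℕ × ℕ)) : List Step :=
  (L.map fun t => Upow t.1 ++ DUpow t.2).flatten

lemma isBlockWord_blockWord (L : List (ℕ × ℕ)) : IsBlockWord (blockWord L) := by
  refine isBlockWord_flatten fun w hw => ?_
  obtain ⟨t, -, rfl⟩ := List.mem_map.1 hw
  exact (isBlockWord_Upow t.1).append (isBlockWord_DUpow t.2)

lemma DUpow_succ (k : ℕ) : DUpow (k + 1) = .D :: .U :: DUpow k := by
  simp [DUpow, List.replicate_succ]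

lemma exists_U_cons_DUpow_append_eq (k : ℕ) (L : List (ℕ × ℕ)) (m : ℕ)
    (hL : ∀ t ∈ L, 1 ≤ t.1 ∧ 1 ≤ t.2) :
    ∃ L' m', (∀ t ∈ L', 1 ≤ t.1 ∧ 1 ≤ t.2) ∧
      .U :: (DUpow k ++ blockWord L ++ Upow m) = blockWord L' ++ Upow m' := by
  match k, L with
  | 0, [] => exact ⟨[], m + 1, by simp, by simp [DUpow, blockWord, Upow, List.replicate_succ]⟩
  | 0, (a, b) :: L =>
    refine ⟨(a + 1, b) :: L, m, ?_, by simp [DUpow, blockWord, Upow, List.replicate_succ]⟩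
    simp only [List.mem_cons, forall_eq_or_imp] at hL ⊢
    exact ⟨⟨by omega, hL.1.2⟩, hL.2⟩
  | k + 1, L =>
    refine ⟨(1, k + 1) :: L, m, ?_, by simp [blockWord, Upow]⟩
    simpa using hL

-- The leading `(DU)^k` makes the statement stable under prepending `U` and `DU`.
lemma IsBlockWord.exists_eq_DUpow_append : ∀ W : List Step, IsBlockWord W →
    ∃ k L m, (∀ t ∈ L, 1 ≤ t.1 ∧ 1 ≤ t.2) ∧ W = DUpow k ++ blockWord L ++ Upow m
  | [], _ => ⟨0, [], 0, by simp, rfl⟩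
  | .U :: W, h => by
    obtain ⟨k, L, m, hL, rfl⟩ := exists_eq_DUpow_append W h.tail
    obtain ⟨L', m', hL', e⟩ := exists_U_cons_DUpow_append_eq k L m hL
    exact ⟨0, L', m', hL', by simpa [DUpow] using e⟩
  | .D :: .U :: W, h => by
    obtain ⟨k, L, m, hL, rfl⟩ := exists_eq_DUpow_append W h.tail.tail
    exact ⟨k + 1, L, m, hL, by simp [DUpow_succ]⟩
  | [.D], h => absurd (h.getElem?_succ_of_eq_D 0 rfl) (by simp)
  | .D :: .D :: _, h => absurd (h.getElem?_succ_of_eq_D 0 rfl) (by simp)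
  | .D :: .C _ :: _, h => absurd (h.getElem?_succ_of_eq_D 0 rfl) (by simp)
  | .C _ :: _, h => absurd (h.mem _ List.mem_cons_self) (by simp)

lemma inL_append_cfin {W : List Step} (hW : IsBlockWord W) (h0 : W[0]? = some .U) {s : ℕ}
    (hs : 1 ≤ s) : InL (W ++ [cfin s]) := by
  obtain ⟨k, L, m, hL, rfl⟩ := hW.exists_eq_DUpow_append W
  obtain rfl : k = 0 := by
    rcases k with _ | k
    · rfl
    · simp [DUpow_succ] at h0
  rcases L with _ | ⟨t, L⟩
  · refine .inr (.inl ⟨m, s, ?_, hs, by simp [DUpow, blockWord]⟩)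
    rcases m with _ | m <;> simp_all [DUpow, blockWord, Upow]
  · exact .inr (.inr ⟨t :: L, m, s, by simp, hL, hs, by simp [DUpow, blockWord]⟩)

lemma InL.exists_isBlockWord {Q : List Step} (hQ : InL Q) (hne : Q ≠ []) :
    ∃ W s, IsBlockWord W ∧ Q = W ++ [cfin s] := by
  rcases hQ with h | ⟨l, s, -, -, h⟩ | ⟨L, m, s, -, -, -, h⟩
  · exact absurd h hne
  · exact ⟨_, s, isBlockWord_Upow l, h⟩
  · exact ⟨_, s, (isBlockWord_blockWord L).append (isBlockWord_Upow m), h⟩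

namespace IsBlockWord

variable {W : List Step}

lemma hgt_nonneg (hW : IsBlockWord W) (h0 : W[0]? = some .U) (j : ℕ) : 0 ≤ hgt W j := by
  -- a `D` is preceded by a `U`, so it never starts below height 1
  suffices ∀ j, 0 ≤ hgt W j ∧ (W[j]? = some .D → 1 ≤ hgt W j) from (this j).1
  intro j
  induction j with
  | zero => simp [hgt_zero, h0]
  | succ j ih =>
    rcases hj : W[j]? with _ | x
    · have hlen : W.length ≤ j := List.getElem?_eq_none_iff.1 hj
      rw [hgt_of_length_le (by omega), ← hgt_of_length_le hlen,
        List.getElem?_eq_none (by omega)]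
      simpa using ih.1
    · rcases hW.mem x (List.mem_of_getElem? hj) with rfl | rfl
      · rw [hgt_succ_of_getElem? hj]
        simp only [Step.val]
        constructor <;> intros <;> omega
      · rw [hgt_succ_of_getElem? hj, hW.getElem?_succ_of_eq_D j hj]
        simp only [Step.val]
        exact ⟨by linarith [ih.2 hj], by simp⟩

lemma one_le_hgt_length (hW : IsBlockWord W) (h0 : W[0]? = some .U) :
    1 ≤ hgt W W.length := by
  obtain ⟨n, hn⟩ : ∃ n, W.length = n + 1 :=
    Nat.exists_eq_add_one.2 (List.getElem?_eq_some_iff.1 h0).1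
  have hlast : W[n]? = some .U := by
    have hx : W[n]? = some W[n] := List.getElem?_eq_getElem (by omega)
    rcases hW.mem _ (List.getElem_mem (by omega : n < W.length)) with h | h <;> rw [h] at hx
    · exact hx
    · simpa [hn] using hW.getElem?_succ_of_eq_D n hx
  rw [hn, hgt_succ_of_getElem? hlast]
  have := hW.hgt_nonneg h0 n
  simp only [Step.val]
  omega

lemma inE_append_cfin (hW : IsBlockWord W) (h0 : W[0]? = some .U) {s : ℕ}
    (hs : (s : ℤ) = hgt W W.length) : InE (W ++ [cfin s]) := by
  have hs1 := hW.one_le_hgt_length h0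
  have hend : hgt (W ++ [cfin s]) (W ++ [cfin s]).length = 0 := by
    simp [hgt_append_cfin, hs]
  refine ⟨fun j => ?_, hend, fun i k hik => ?_⟩
  · rcases le_or_gt j W.length with hj | hj
    · rw [hgt_append_of_le_length hj]
      exact hW.hgt_nonneg h0 j
    · rw [hgt_of_length_le (by simpa using hj), hend]
  · rcases lt_trichotomy i W.length with hi | rfl | hi
    · rw [List.getElem?_append_left hi] at hik
      simpa using hW.mem _ (List.mem_of_getElem? hik)
    · simp only [List.getElem?_append_right le_rfl, Nat.sub_self, List.getElem?_cons_zero,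
        Option.some.injEq, cfin] at hik
      split at hik
      · cases hik
      · cases hik
        rw [hgt_append_of_le_length le_rfl]
        omega
    · rw [List.getElem?_eq_none (by simpa using hi)] at hik
      cases hik

end IsBlockWord

def IsDUAt (P : List Step) (i : ℕ) : Prop := P[i]? = some .D ∧ P[i + 1]? = some .U

instance (P : List Step) : DecidablePred (IsDUAt P) :=
  fun _ => inferInstanceAs (Decidable (_ ∧ _))

lemma DUEquiv.symm {P Q : List Step} (h : DUEquiv P Q) : DUEquiv Q P := fun i => (h i).symm

lemma DUEquiv.trans {P Q R : List Step} (h₁ : DUEquiv P Q) (h₂ : DUEquiv Q R) : DUEquiv P R :=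
  fun i => (h₁ i).trans (h₂ i)

lemma IsBlockWord.isDUAt_append_singleton_iff {W : List Step} (hW : IsBlockWord W) (c : Step)
    {i : ℕ} : IsDUAt (W ++ [c]) i ↔ W[i]? = some .D := by
  constructor
  · rintro ⟨hD, hU⟩
    rcases lt_or_ge i W.length with hi | hi
    · rwa [List.getElem?_append_left hi] at hD
    · rcases hi.eq_or_lt with rfl | hi
      · simp at hU
      · simp [List.getElem?_eq_none (by simp; omega : (W ++ [c]).length ≤ i)] at hD
  · intro hD
    have hU := hW.getElem?_succ_of_eq_D i hD
    have hi := (List.getElem?_eq_some_iff.1 hU).1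
    exact ⟨by rwa [List.getElem?_append_left (by omega)],
      by rwa [List.getElem?_append_left hi]⟩

lemma eq_of_getElem?_eq_D_iff {W W' : List Step} (hW : ∀ x ∈ W, x = .U ∨ x = .D)
    (hW' : ∀ x ∈ W', x = .U ∨ x = .D) (hlen : W.length = W'.length)
    (hD : ∀ i : ℕ, W[i]? = some Step.D ↔ W'[i]? = some Step.D) : W = W' := by
  refine List.ext_getElem hlen fun i h h' => ?_
  have := hD i
  rw [List.getElem?_eq_getElem h, List.getElem?_eq_getElem h'] at this
  rcases hW _ (List.getElem_mem h) with e | e <;>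
    rcases hW' _ (List.getElem_mem h') with e' | e' <;> simp_all

theorem eq_of_duEquiv {Q₁ Q₂ : List Step} (hE₁ : InE Q₁) (hL₁ : InL Q₁) (hE₂ : InE Q₂)
    (hL₂ : InL Q₂) (hlen : Q₁.length = Q₂.length) (h : DUEquiv Q₁ Q₂) : Q₁ = Q₂ := by
  rcases eq_or_ne Q₁ [] with rfl | hne₁
  · exact (List.length_eq_zero_iff.1 hlen.symm).symm
  have hne₂ : Q₂ ≠ [] := by
    rintro rfl
    exact hne₁ (List.length_eq_zero_iff.1 hlen)
  obtain ⟨W₁, s₁, hW₁, rfl⟩ := hL₁.exists_isBlockWord hne₁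
  obtain ⟨W₂, s₂, hW₂, rfl⟩ := hL₂.exists_isBlockWord hne₂
  obtain rfl : W₁ = W₂ := eq_of_getElem?_eq_D_iff hW₁.mem hW₂.mem (by simpa using hlen)
    fun i => by
      rw [← hW₁.isDUAt_append_singleton_iff (cfin s₁),
        ← hW₂.isDUAt_append_singleton_iff (cfin s₂)]
      exact h i
  have e₁ := hE₁.2.1
  have e₂ := hE₂.2.1
  simp only [List.length_append, List.length_singleton, hgt_append_cfin] at e₁ e₂
  obtain rfl : s₁ = s₂ := by omega
  rfl

def duWord (P : List Step) : List Step :=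
  (List.range (P.length - 1)).map fun i => if IsDUAt P i then .D else .U

lemma length_duWord (P : List Step) : (duWord P).length = P.length - 1 := by
  simp [duWord]

lemma getElem?_duWord {P : List Step} {i : ℕ} (hi : i < P.length - 1) :
    (duWord P)[i]? = some (if IsDUAt P i then .D else .U) := by
  simp [duWord, hi]

namespace InE

variable {P : List Step}

lemma not_isDUAt_zero (hP : InE P) : ¬ IsDUAt P 0 := fun ⟨hD, _⟩ => by
  have := hP.1 1
  rw [hgt_succ_of_getElem? hD, hgt_zero] at this
  simp [Step.val] at this

lemma add_two_lt_length_of_isDUAt (hP : InE P) {i : ℕ} (h : IsDUAt P i) : i + 2 < P.length := by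
  have hU := h.2
  have hi : i + 1 < P.length := (List.getElem?_eq_some_iff.1 hU).1
  by_contra hc
  have hend := hP.2.1
  rw [show P.length = i + 1 + 1 by omega, hgt_succ_of_getElem? hU] at hend
  have := hP.1 (i + 1)
  simp only [Step.val] at hend
  omega

lemma length_ne_one (hP : InE P) : P.length ≠ 1 := by
  intro h1
  have hx : P[0]? = some P[0] := List.getElem?_eq_getElem (by omega)
  have hend := hP.2.1
  rw [h1, hgt_succ_of_getElem? hx, hgt_zero] at hend
  match hP0 : P[0], hx with
  | .U, _ => simp [hP0, Step.val] at hend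
  | .D, _ => simp [hP0, Step.val] at hend
  | .C k, hx =>
    have := hP.2.2 0 k hx
    rw [hgt_zero] at this
    omega

lemma getElem?_duWord_eq_D_iff (hP : InE P) {i : ℕ} :
    (duWord P)[i]? = some .D ↔ IsDUAt P i := by
  refine ⟨fun h => ?_, fun h => ?_⟩
  · have hi : i < P.length - 1 := by simpa [length_duWord] using (List.getElem?_eq_some_iff.1 h).1
    rw [getElem?_duWord hi] at h
    by_contra hn
    simp [hn] at h
  · rw [getElem?_duWord (by have := hP.add_two_lt_length_of_isDUAt h; omega), if_pos h]

lemma isBlockWord_duWord (hP : InE P) : IsBlockWord (duWord P) := by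
  refine ⟨fun x hx => ?_, fun i hi => ?_⟩
  · obtain ⟨i, -, rfl⟩ := List.mem_map.1 hx
    split <;> simp
  · have h := hP.getElem?_duWord_eq_D_iff.1 hi
    have hnext : ¬ IsDUAt P (i + 1) := fun h' => by simpa [h.2] using h'.1
    rw [getElem?_duWord (by have := hP.add_two_lt_length_of_isDUAt h; omega), if_neg hnext]

lemma getElem?_duWord_zero (hP : InE P) (hne : P ≠ []) : (duWord P)[0]? = some .U := by
  have : 2 ≤ P.length := by
    have := hP.length_ne_one
    have := List.length_pos_iff.2 hne
    omega
  rw [getElem?_duWord (by omega), if_neg hP.not_isDUAt_zero]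

theorem exists_inL_duEquiv (hP : InE P) :
    ∃ Q, (InE Q ∧ InL Q) ∧ Q.length = P.length ∧ DUEquiv P Q := by
  rcases eq_or_ne P [] with rfl | hne
  · exact ⟨[], ⟨⟨by simp [hgt], by simp [hgt], by simp⟩, .inl rfl⟩, rfl, fun _ => .rfl⟩
  have hW := hP.isBlockWord_duWord
  have h0 := hP.getElem?_duWord_zero hne
  set W := duWord P
  set s := (hgt W W.length).toNat
  have hpos := hW.one_le_hgt_length h0
  have hs : (s : ℤ) = hgt W W.length := Int.toNat_of_nonneg (by omega)
  refine ⟨W ++ [cfin s], ⟨hW.inE_append_cfin h0 hs, inL_append_cfin hW h0 (by omega)⟩, ?_,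
    fun i => ?_⟩
  · have := List.length_pos_iff.2 hne
    simp only [List.length_append, List.length_singleton, W, length_duWord]
    omega
  · change IsDUAt P i ↔ IsDUAt _ i
    rw [hW.isDUAt_append_singleton_iff, hP.getElem?_duWord_eq_D_iff]

end InE

/-- ℒ is a complete set of representatives of the DU-equivalence classes of ℰ. -/
theorem L_complete_set_of_representatives_for_DUEquiv (P : List Step) (hP : InE P) :
    ∃! Q : List Step, (InE Q ∧ InL Q) ∧ Q.length = P.length ∧ DUEquiv P Q := by
  obtain ⟨Q, hQ, hlen, hPQ⟩ := hP.exists_inL_duEquiv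
  refine ⟨Q, ⟨hQ, hlen, hPQ⟩, fun Q' ⟨hQ', hlen', hPQ'⟩ => ?_⟩
  exact eq_of_duEquiv hQ'.1 hQ'.2 hQ.1 hQ.2 (hlen'.trans hlen.symm) (hPQ'.symm.trans hPQ)
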